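/- Weighted dyadic interpolation inequality for multi-indexed sequences (the interpolation step in the proof of Theorem 5.2): Let q ≥ 1 be an integer and α₀ ≥ 0 a real number. There exists a constant C = C(q) > 0 such that for all real ε > 0 and α with α₀ + 2ε ≤ α < 1, and for every family of nonnegative reals (a_J)_{J ∈ ℕ^q}, one has ∑_{J ∈ ℕ^q} 2^{α₀ σ(J)} a_J ≤ C · ε^{−q/2} · (∑_{J ∈ ℕ^q} 2^{2σ(J)} a_J²)^{α/2} · (∑_{J ∈ ℕ^q} a_J²)^{(1−α)/2}, where σ(J) := j₁ + ⋯ + j_q for J = (j₁,…,j_q). (The inequality is interpreted in the extended nonnegative reals, so it holds trivially when a sum on the right-hand side is infinite.) -/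

import Mathlib

/-!
Factor `2^{α₀ σ(J)} a_J = 2^{(α₀ - α) σ(J)} · (2^{2σ(J)} a_J²)^{α/2} · (a_J²)^{(1-α)/2}`.
Cauchy–Schwarz splits off the weight, and Hölder with exponents `1/α`, `1/(1-α)` bounds the
ℓ² norm of the second factor by the two sums on the right. The squared weight is a product of
`q` geometric series of ratio `2^{2(α₀-α)} ≤ 2^{-4ε}`, each at most `1/ε` because
`2^{4ε} ≥ 1 + 2ε`; hence `C = 1` works.
-/

open scoped ENNReal NNReal

theorem two_rpow_neg_four_mul_le {ε : ℝ} (hε₀ : 0 ≤ ε) (hε : ε ≤ 1 / 2) :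
    (2 : ℝ) ^ (-(4 * ε)) ≤ 1 - ε := by
  have hlog : 1 / 2 < Real.log 2 := by linarith [Real.log_two_gt_d9]
  have hpow : 1 + 2 * ε ≤ (2 : ℝ) ^ (4 * ε) := by
    rw [Real.rpow_def_of_pos two_pos]
    nlinarith [Real.add_one_le_exp (Real.log 2 * (4 * ε))]
  rw [Real.rpow_neg zero_le_two, inv_le_iff_one_le_mul₀ (by positivity)]
  nlinarith

namespace ENNReal

/- Hölder for sums is Hölder for the counting measure, with the discrete σ-algebra making every
function measurable. -/

open MeasureTheory in
theorem tsum_mul_le_sqrt_mul_sqrt {ι : Type*} (f g : ι → ℝ≥0∞) :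
    ∑' i, f i * g i ≤ (∑' i, f i ^ 2) ^ (1 / 2 : ℝ) * (∑' i, g i ^ 2) ^ (1 / 2 : ℝ) := by
  let _ : MeasurableSpace ι := ⊤
  have h := lintegral_mul_le_Lp_mul_Lq (Measure.count : Measure ι) Real.HolderConjugate.two_two
    (measurable_from_top (f := f)).aemeasurable (measurable_from_top (f := g)).aemeasurable
  simpa [lintegral_count' measurable_from_top] using h

open MeasureTheory in
theorem tsum_rpow_mul_rpow_le {ι : Type*} (f g : ι → ℝ≥0∞) {p q : ℝ}
    (hp : 0 ≤ p) (hq : 0 ≤ q) (hpq : p + q = 1) :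
    ∑' i, f i ^ p * g i ^ q ≤ (∑' i, f i) ^ p * (∑' i, g i) ^ q := by
  let _ : MeasurableSpace ι := ⊤
  have h := lintegral_mul_norm_pow_le (μ := (Measure.count : Measure ι))
    (measurable_from_top (f := f)).aemeasurable (measurable_from_top (f := g)).aemeasurable
    hp hq hpq
  simpa [lintegral_count' measurable_from_top] using h

theorem tsum_pi_fin_prod_eq_prod_tsum {β : Type*} : ∀ {n : ℕ} (f : Fin n → β → ℝ≥0∞),
    ∑' J : Fin n → β, ∏ i, f i (J i) = ∏ i, ∑' b, f i b
  | 0, f => by simp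
  | n + 1, f => by
    rw [← (Fin.consEquiv fun _ => β).tsum_eq, Fin.prod_univ_succ, ← tsum_pi_fin_prod_eq_prod_tsum,
      ENNReal.tsum_prod', ← ENNReal.tsum_mul_right]
    refine tsum_congr fun b => ?_
    simp [Fin.consEquiv, Fin.prod_univ_succ, ENNReal.tsum_mul_left]

theorem tsum_pow_sum_eq_inv_one_sub_pow (r : ℝ≥0∞) (n : ℕ) :
    ∑' J : Fin n → ℕ, r ^ (∑ i, J i) = ((1 - r)⁻¹) ^ n := by
  simp_rw [← Finset.prod_pow_eq_pow_sum, tsum_pi_fin_prod_eq_prod_tsum, ENNReal.tsum_geometric,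
    Finset.prod_const, Finset.card_univ, Fintype.card_fin]

theorem tsum_mul_rpow_mul_rpow_le {ι : Type*} (w u v : ι → ℝ≥0∞) {θ : ℝ} (hθ₀ : 0 ≤ θ)
    (hθ₁ : θ ≤ 1) :
    ∑' i, w i * (u i ^ (θ / 2) * v i ^ ((1 - θ) / 2)) ≤
      (∑' i, w i ^ 2) ^ (1 / 2 : ℝ) * ((∑' i, u i) ^ (θ / 2) * (∑' i, v i) ^ ((1 - θ) / 2)) := by
  refine (tsum_mul_le_sqrt_mul_sqrt _ _).trans ?_
  gcongr
  have hsq : ∀ i, (u i ^ (θ / 2) * v i ^ ((1 - θ) / 2)) ^ 2 = u i ^ θ * v i ^ (1 - θ) := by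
    intro i
    rw [mul_pow, ← rpow_two, ← rpow_two, ← rpow_mul, ← rpow_mul]
    ring_nf
  calc (∑' i, (u i ^ (θ / 2) * v i ^ ((1 - θ) / 2)) ^ 2) ^ (1 / 2 : ℝ)
      = (∑' i, u i ^ θ * v i ^ (1 - θ)) ^ (1 / 2 : ℝ) := by simp_rw [hsq]
    _ ≤ ((∑' i, u i) ^ θ * (∑' i, v i) ^ (1 - θ)) ^ (1 / 2 : ℝ) := by
      gcongr
      exact tsum_rpow_mul_rpow_le _ _ hθ₀ (by linarith) (by ring)
    _ = (∑' i, u i) ^ (θ / 2) * (∑' i, v i) ^ ((1 - θ) / 2) := by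
      rw [mul_rpow_of_nonneg _ _ (by norm_num), ← rpow_mul, ← rpow_mul]
      ring_nf

theorem two_rpow_mul_eq_mul_rpow_mul_rpow (c θ s : ℝ) (b : ℝ≥0∞) (hθ₀ : 0 ≤ θ) (hθ₁ : θ ≤ 1) :
    (2 : ℝ≥0∞) ^ (c * s) * b =
      2 ^ ((c - θ) * s) * ((2 ^ (2 * s) * b ^ 2) ^ (θ / 2) * (b ^ 2) ^ ((1 - θ) / 2)) := by
  have hb : (b ^ 2) ^ (θ / 2) * (b ^ 2) ^ ((1 - θ) / 2) = b := by
    rw [← rpow_add_of_nonneg _ _ (by linarith) (by linarith), ← rpow_two, ← rpow_mul]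
    ring_nf
    exact rpow_one b
  rw [mul_rpow_of_nonneg _ _ (by linarith), ← rpow_mul, mul_assoc, hb, ← mul_assoc,
    ← rpow_add _ _ two_ne_zero ofNat_ne_top]
  ring_nf

theorem ofReal_le_one_sub_two_rpow {ε c : ℝ} (hε₀ : 0 ≤ ε) (hε : ε ≤ 1 / 2)
    (hc : c ≤ -(4 * ε)) : ENNReal.ofReal ε ≤ 1 - (2 : ℝ≥0∞) ^ c := by
  have h2c : (2 : ℝ≥0∞) ^ c ≤ ENNReal.ofReal (1 - ε) :=
    calc (2 : ℝ≥0∞) ^ c ≤ 2 ^ (-(4 * ε)) := rpow_le_rpow_of_exponent_le one_le_two hc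
      _ = ENNReal.ofReal (2 ^ (-(4 * ε))) := by rw [← ofReal_rpow_of_pos two_pos]; norm_num
      _ ≤ ENNReal.ofReal (1 - ε) := ofReal_le_ofReal (two_rpow_neg_four_mul_le hε₀ hε)
  calc ENNReal.ofReal ε = 1 - ENNReal.ofReal (1 - ε) := by
        rw [← ofReal_one, ← ofReal_sub _ (by linarith)]; ring_nf
    _ ≤ 1 - 2 ^ c := tsub_le_tsub_left h2c 1

theorem tsum_sq_two_rpow_mul_sum_le {q : ℕ} {ε c : ℝ} (hε₀ : 0 < ε) (hε : ε ≤ 1 / 2)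
    (hc : c ≤ -(2 * ε)) :
    (∑' J : Fin q → ℕ, ((2 : ℝ≥0∞) ^ (c * ∑ i, (J i : ℝ))) ^ 2) ^ (1 / 2 : ℝ) ≤
      ENNReal.ofReal (ε ^ (-(q : ℝ) / 2)) := by
  have hJ : ∀ J : Fin q → ℕ,
      ((2 : ℝ≥0∞) ^ (c * ∑ i, (J i : ℝ))) ^ 2 = ((2 : ℝ≥0∞) ^ (2 * c)) ^ (∑ i, J i) := by
    intro J
    rw [← rpow_two, ← rpow_natCast, ← rpow_mul, ← rpow_mul]
    push_cast
    ring_nf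
  rw [tsum_congr hJ, tsum_pow_sum_eq_inv_one_sub_pow]
  calc (((1 - (2 : ℝ≥0∞) ^ (2 * c))⁻¹) ^ q) ^ (1 / 2 : ℝ)
      ≤ (((ENNReal.ofReal ε)⁻¹) ^ q) ^ (1 / 2 : ℝ) := by
        gcongr
        exact ofReal_le_one_sub_two_rpow hε₀.le hε (by linarith)
    _ = ENNReal.ofReal (ε ^ (-(q : ℝ) / 2)) := by
        rw [← ofReal_inv_of_pos hε₀, ← rpow_natCast, ← rpow_mul,
          ofReal_rpow_of_pos (inv_pos.2 hε₀), Real.inv_rpow hε₀.le, ← Real.rpow_neg hε₀.le]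
        ring_nf

end ENNReal

theorem weighted_dyadic_interpolation_general (q : ℕ) (α₀ : ℝ) (hα₀ : 0 ≤ α₀) :
    ∃ C : ℝ, 0 < C ∧
      ∀ (ε α : ℝ), 0 < ε → α₀ + 2 * ε ≤ α → α < 1 →
        ∀ a : (Fin q → ℕ) → ℝ≥0,
          (∑' J : Fin q → ℕ, (2 : ℝ≥0∞) ^ (α₀ * ∑ i : Fin q, (J i : ℝ)) * (a J : ℝ≥0∞))
            ≤ ENNReal.ofReal (C * ε ^ (-(q : ℝ) / 2))
                * (∑' J : Fin q → ℕ,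
                    (2 : ℝ≥0∞) ^ (2 * ∑ i : Fin q, (J i : ℝ)) * (a J : ℝ≥0∞) ^ 2)
                    ^ (α / 2)
                * (∑' J : Fin q → ℕ, (a J : ℝ≥0∞) ^ 2) ^ ((1 - α) / 2) := by
  refine ⟨1, one_pos, fun ε α hε hα hα₁ a => ?_⟩
  have hα_nonneg : 0 ≤ α := by linarith
  rw [tsum_congr fun J =>
      ENNReal.two_rpow_mul_eq_mul_rpow_mul_rpow α₀ α _ (a J) hα_nonneg hα₁.le,
    one_mul, mul_assoc]
  refine (ENNReal.tsum_mul_rpow_mul_rpow_le _ _ _ hα_nonneg hα₁.le).trans ?_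
  gcongr
  exact ENNReal.tsum_sq_two_rpow_mul_sum_le hε (by linarith) (by linarith)

/-- Weighted dyadic interpolation inequality for multi-indexed sequences: with
`σ(J) = j₁ + ⋯ + j_q`, there is `C = C(q) > 0` such that for all `ε > 0` and
`α₀ + 2ε ≤ α < 1` and every family of nonnegative reals `(a_J)_{J ∈ ℕ^q}`,
`∑_J 2^{α₀ σ(J)} a_J ≤ C ε^{−q/2} (∑_J 2^{2σ(J)} a_J²)^{α/2} (∑_J a_J²)^{(1−α)/2}`,
interpreted in `[0,∞]`. -/
theorem weighted_dyadic_interpolation (q : ℕ) (hq : 1 ≤ q) (α₀ : ℝ) (hα₀ : 0 ≤ α₀) :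
    ∃ C : ℝ, 0 < C ∧
      ∀ (ε α : ℝ), 0 < ε → α₀ + 2 * ε ≤ α → α < 1 →
        ∀ a : (Fin q → ℕ) → ℝ≥0,
          (∑' J : Fin q → ℕ, (2 : ℝ≥0∞) ^ (α₀ * ∑ i : Fin q, (J i : ℝ)) * (a J : ℝ≥0∞))
            ≤ ENNReal.ofReal (C * ε ^ (-(q : ℝ) / 2))
                * (∑' J : Fin q → ℕ,
                    (2 : ℝ≥0∞) ^ (2 * ∑ i : Fin q, (J i : ℝ)) * (a J : ℝ≥0∞) ^ 2)
                    ^ (α / 2)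
                * (∑' J : Fin q → ℕ, (a J : ℝ≥0∞) ^ 2) ^ ((1 - α) / 2) :=
  weighted_dyadic_interpolation_general q α₀ hα₀
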